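/- arXiv:1606.03186 — 8 statements merged into one kernel-verified Lean document; each statement's English description precedes it below -/
import Mathlib

section
/- The series 1 + 1/3 − 1/5 − 1/7 + 1/9 + 1/11 − 1/13 − 1/15 + ⋯, with signs in the pattern (+,+,−,−) repeating on consecutive odd reciprocals, converges and equals π√2/4. -/
open Real Filter Topology intervalIntegral

/-!
Each block of four terms is `∫₀¹ x^(8m) (1 + x²)(1 - x⁴) dx`, so summing the geometric series
under the integral shows that the partial sums are `∫₀¹ (1 + x²)/(1 + x⁴) dx` minus a tail
`∫₀¹ x^(8N) (1 + x²)/(1 + x⁴) dx = O(1/N)`. As `1 + x⁴ = (x² + √2 x + 1)(x² - √2 x + 1)`,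
the integrand has the antiderivative `(√2/2)(arctan(√2 x + 1) + arctan(√2 x - 1))`, whose
increment over `[0, 1]` is `π √2 / 4`.
-/

theorem sum_range_pow_two_mul_mul_one_sub_mul_one_add {R : Type*} [CommRing R] (q : R) (N : ℕ) :
    (∑ m ∈ Finset.range N, q ^ (2 * m) * (1 - q)) * (1 + q) = 1 - q ^ (2 * N) := by
  simp_rw [pow_mul, ← Finset.sum_mul]
  linear_combination (-1 : R) * geom_sum_mul (q ^ 2) N

theorem abs_integral_pow_mul_le {g : ℝ → ℝ} {C : ℝ} (hg : ∀ x ∈ Set.Icc (0 : ℝ) 1, |g x| ≤ C)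
    (n : ℕ) : |∫ x in (0 : ℝ)..1, x ^ n * g x| ≤ C / (n + 1) := by
  rw [← Real.norm_eq_abs]
  calc ‖∫ x in (0 : ℝ)..1, x ^ n * g x‖ ≤ ∫ x in (0 : ℝ)..1, C * x ^ n := by
        refine norm_integral_le_of_norm_le zero_le_one (MeasureTheory.ae_of_all _ fun x hx => ?_)
          ((continuous_const.mul (continuous_pow n)).intervalIntegrable 0 1)
        have hx0 : 0 ≤ x := hx.1.le
        rw [Real.norm_eq_abs, abs_mul, abs_of_nonneg (pow_nonneg hx0 n), mul_comm]
        exact mul_le_mul_of_nonneg_right (hg x ⟨hx0, hx.2⟩) (pow_nonneg hx0 n)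
    _ = C / (n + 1) := by simp [integral_pow, div_eq_mul_inv]

theorem tendsto_integral_pow_mul_zero {g : ℝ → ℝ} (hg : ContinuousOn g (Set.Icc 0 1)) :
    Tendsto (fun n : ℕ => ∫ x in (0 : ℝ)..1, x ^ n * g x) atTop (𝓝 0) := by
  obtain ⟨C, hC⟩ := isCompact_Icc.exists_bound_of_continuousOn hg
  refine squeeze_zero_norm (fun n => abs_integral_pow_mul_le hC n) ?_
  simpa [div_eq_mul_inv] using (tendsto_one_div_add_atTop_nhds_zero_nat).const_mul C

theorem hasDerivAt_arctan_add_arctan (x : ℝ) :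
    HasDerivAt (fun x : ℝ => √2 / 2 * (arctan (√2 * x + 1) + arctan (√2 * x - 1)))
      ((1 + x ^ 2) / (1 + x ^ 4)) x := by
  have hplus := (((hasDerivAt_id' x).const_mul √2).add_const 1).arctan
  have hminus := (((hasDerivAt_id' x).const_mul √2).sub_const 1).arctan
  refine ((hplus.add hminus).const_mul (√2 / 2)).congr_deriv ?_
  have hs : √2 ^ 2 = 2 := sq_sqrt zero_le_two
  have : 1 + (√2 * x + 1) ^ 2 ≠ 0 := by positivity
  have : 1 + (√2 * x - 1) ^ 2 ≠ 0 := by positivity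
  have : 1 + x ^ 4 ≠ 0 := by positivity
  field_simp
  linear_combination (4 + 2 * x ^ 2 * (√2 ^ 2 + 2) - 2 * √2 ^ 2 * x ^ 4) * hs

theorem continuous_one_add_sq_div_one_add_pow_four :
    Continuous (fun x : ℝ => (1 + x ^ 2) / (1 + x ^ 4)) := by
  fun_prop (disch := intro x; positivity)

theorem integral_one_add_sq_div_one_add_pow_four :
    ∫ x in (0 : ℝ)..1, (1 + x ^ 2) / (1 + x ^ 4) = π * √2 / 4 := by
  rw [integral_eq_sub_of_hasDerivAt (fun x _ => hasDerivAt_arctan_add_arctan x)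
    (continuous_one_add_sq_div_one_add_pow_four.intervalIntegrable 0 1)]
  -- `√2 - 1 = (√2 + 1)⁻¹`, so the two arctangents at `1` add up to `π / 2`
  have hinv : (√2 + 1)⁻¹ = √2 - 1 :=
    inv_eq_of_mul_eq_one_right (by linear_combination mul_self_sqrt zero_le_two)
  have harctan := arctan_inv_of_pos (show 0 < √2 + 1 by positivity)
  rw [hinv] at harctan
  simp only [mul_one, mul_zero, zero_add, zero_sub]
  rw [harctan, arctan_neg, arctan_one]
  ring

theorem integral_pow_mul_one_add_sq_mul_one_sub_pow_four (m : ℕ) :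
    ∫ x in (0 : ℝ)..1, x ^ (8 * m) * ((1 + x ^ 2) * (1 - x ^ 4)) =
      1 / (8 * (m : ℝ) + 1) + 1 / (8 * (m : ℝ) + 3) - 1 / (8 * (m : ℝ) + 5) - 1 / (8 * (m : ℝ) + 7) := by
  have hexpand : ∀ x : ℝ, x ^ (8 * m) * ((1 + x ^ 2) * (1 - x ^ 4)) =
      x ^ (8 * m) + x ^ (8 * m + 2) - x ^ (8 * m + 4) - x ^ (8 * m + 6) := fun x => by ring
  simp_rw [hexpand]
  rw [integral_sub, integral_sub, integral_add]
  · simp only [integral_pow]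
    push_cast
    ring
  all_goals apply Continuous.intervalIntegrable; fun_prop

theorem sum_range_eq_integral_sub_integral_pow_mul (N : ℕ) :
    ∑ m ∈ Finset.range N,
        (1 / (8 * (m : ℝ) + 1) + 1 / (8 * (m : ℝ) + 3) - 1 / (8 * (m : ℝ) + 5) - 1 / (8 * (m : ℝ) + 7)) =
      (∫ x in (0 : ℝ)..1, (1 + x ^ 2) / (1 + x ^ 4)) -
        ∫ x in (0 : ℝ)..1, x ^ (8 * N) * ((1 + x ^ 2) / (1 + x ^ 4)) := by
  have hf := continuous_one_add_sq_div_one_add_pow_four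
  simp_rw [← integral_pow_mul_one_add_sq_mul_one_sub_pow_four]
  rw [← integral_finsetSum (fun m _ => by apply Continuous.intervalIntegrable; fun_prop),
    ← integral_sub (hf.intervalIntegrable 0 1) (by apply Continuous.intervalIntegrable; fun_prop)]
  refine integral_congr fun x _ => ?_
  have hgeom := sum_range_pow_two_mul_mul_one_sub_mul_one_add (x ^ 4) N
  have hterm : ∀ m : ℕ, x ^ (8 * m) * ((1 + x ^ 2) * (1 - x ^ 4)) =
      (x ^ 4) ^ (2 * m) * (1 - x ^ 4) * (1 + x ^ 2) := fun m => by ring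
  rw [Finset.sum_congr rfl fun m _ => hterm m, ← Finset.sum_mul]
  have : 1 + x ^ 4 ≠ 0 := by positivity
  rw [← one_sub_mul, ← mul_div_assoc, eq_div_iff this]
  linear_combination (1 + x ^ 2) * hgeom

theorem one_div_add_one_div_sub_one_div_sub_one_div_nonneg (m : ℕ) :
    0 ≤ 1 / (8 * (m : ℝ) + 1) + 1 / (8 * (m : ℝ) + 3) - 1 / (8 * (m : ℝ) + 5) - 1 / (8 * (m : ℝ) + 7) := by
  have h15 : 1 / (8 * (m : ℝ) + 5) ≤ 1 / (8 * (m : ℝ) + 1) :=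
    one_div_le_one_div_of_le (by positivity) (by linarith)
  have h37 : 1 / (8 * (m : ℝ) + 7) ≤ 1 / (8 * (m : ℝ) + 3) :=
    one_div_le_one_div_of_le (by positivity) (by linarith)
  linarith

theorem stmt7 :
    HasSum (fun m : ℕ =>
        1 / (8 * (m : ℝ) + 1) + 1 / (8 * (m : ℝ) + 3)
          - 1 / (8 * (m : ℝ) + 5) - 1 / (8 * (m : ℝ) + 7))
      (π * Real.sqrt 2 / 4) := by
  rw [hasSum_iff_tendsto_nat_of_nonneg one_div_add_one_div_sub_one_div_sub_one_div_nonneg]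
  have htail := (tendsto_integral_pow_mul_zero
    continuous_one_add_sq_div_one_add_pow_four.continuousOn).comp
    (tendsto_atTop_mono (fun N => Nat.le_mul_of_pos_left N (by norm_num : 0 < 8)) tendsto_id)
  simp_rw [sum_range_eq_integral_sub_integral_pow_mul, integral_one_add_sq_div_one_add_pow_four]
  simpa using htail.const_sub (π * √2 / 4)
end

section
/- The series 1/1³ + 1/3³ − 1/5³ − 1/7³ + 1/9³ + 1/11³ − 1/13³ − 1/15³ + ⋯, with sign pattern (+,+,−,−) repeating on reciprocals of cubes of odd numbers, converges and equals 3π³√2/128. -/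
open Real

/-!
The Fourier series of the Bernoulli polynomial `B₃`, evaluated at `1 / 8`, gives
`∑ₙ sin (π n / 4) / n³ = 7 π³ / 256`. Its even-index part is `1/8` of
`∑ₙ sin (π n / 2) / n³ = π³ / 32`, so the odd-index part is `3 π³ / 128`. For odd `n` the factor
`sin (π n / 4)` is `√2 / 2` times the sign pattern `(+, +, -, -)` repeating with period `8`;
grouping the odd terms in blocks of four and multiplying by `√2` gives the series.
-/

theorem Polynomial.bernoulli_three_eval_one_eighth :
    (Polynomial.bernoulli 3).eval (1 / 8 : ℚ) = 21 / 512 := by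
  simp_rw [Polynomial.bernoulli, Finset.sum_range_succ, Polynomial.eval_add,
    Polynomial.eval_monomial]
  rw [Finset.sum_range_zero, Polynomial.eval_zero, zero_add, _root_.bernoulli_one,
    bernoulli_eq_bernoulli'_of_ne_one zero_ne_one, bernoulli'_zero,
    bernoulli_eq_bernoulli'_of_ne_one (by decide : 2 ≠ 1), bernoulli'_two,
    bernoulli_eq_bernoulli'_of_ne_one (by decide : 3 ≠ 1), bernoulli'_three]
  norm_num

theorem HasSum.odd_of_even {G : Type*} [AddCommGroup G] [UniformSpace G] [IsUniformAddGroup G]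
    [CompleteSpace G] [T2Space G] {f : ℕ → G} {a b : G} (hf : HasSum f a)
    (he : HasSum (fun k ↦ f (2 * k)) b) : HasSum (fun k ↦ f (2 * k + 1)) (a - b) := by
  obtain ⟨c, hc⟩ := hf.summable.comp_injective (i := fun k ↦ 2 * k + 1)
    fun _ _ h ↦ by simp only at h; omega
  obtain rfl : a = b + c := hf.unique (he.even_add_odd hc)
  rwa [add_sub_cancel_left]

theorem HasSum.sum_range_mul_add {M : Type*} [AddCommMonoid M] [TopologicalSpace M]
    [ContinuousAdd M] [RegularSpace M] {f : ℕ → M} {a : M} (n : ℕ) [NeZero n]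
    (hf : HasSum f a) : HasSum (fun m ↦ ∑ j ∈ Finset.range n, f (n * m + j)) a := by
  refine ((Nat.divModEquiv n).symm.hasSum_iff.mpr hf).prod_fiberwise fun m ↦ ?_
  simpa [Finset.sum_range, mul_comm n m] using hasSum_fintype _

noncomputable def sinCubeSeq (n : ℕ) : ℝ := 1 / (n : ℝ) ^ 3 * sin (π * n / 4)

theorem hasSum_sinCubeSeq : HasSum sinCubeSeq (7 * π ^ 3 / 256) := by
  have h := hasSum_one_div_nat_pow_mul_sin one_ne_zero (x := 1 / 8) (by constructor <;> norm_num)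
  have h8 : (1 / 8 : ℝ) = algebraMap ℚ ℝ (1 / 8) := by norm_num
  rw [h8, Polynomial.eval_map, Polynomial.eval₂_at_apply, (by norm_num : 2 * 1 + 1 = 3),
    Polynomial.bernoulli_three_eval_one_eighth, ← h8] at h
  have hf : sinCubeSeq = fun n : ℕ ↦ 1 / (n : ℝ) ^ 3 * sin (2 * π * n * (1 / 8)) := by
    ext n; simp only [sinCubeSeq]; ring_nf
  rw [hf]
  convert h using 1
  norm_num [Nat.factorial]
  ring

theorem sinCubeSeq_two_mul (k : ℕ) :
    sinCubeSeq (2 * k) = 1 / 8 * (1 / (k : ℝ) ^ 3 * sin (π * k / 2)) := by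
  simp only [sinCubeSeq]
  push_cast
  ring_nf

theorem hasSum_sinCubeSeq_even : HasSum (fun k ↦ sinCubeSeq (2 * k)) (π ^ 3 / 256) := by
  rw [show π ^ 3 / 256 = 1 / 8 * (π ^ 3 / 32) by ring]
  simpa only [sinCubeSeq_two_mul] using hasSum_L_function_mod_four_eval_three.mul_left (1 / 8)

theorem hasSum_sinCubeSeq_odd : HasSum (fun k ↦ sinCubeSeq (2 * k + 1)) (3 * π ^ 3 / 128) := by
  rw [show 3 * π ^ 3 / 128 = 7 * π ^ 3 / 256 - π ^ 3 / 256 by ring]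
  exact hasSum_sinCubeSeq.odd_of_even hasSum_sinCubeSeq_even

theorem sin_pi_mul_eight_mul_add_div_four (m : ℕ) (x : ℝ) :
    sin (π * (8 * m + x) / 4) = sin (π * x / 4) := by
  rw [show π * (8 * m + x) / 4 = π * x / 4 + m * (2 * π) by ring, sin_add_nat_mul_two_pi]

theorem sqrt_two_mul_sum_sinCubeSeq_odd_block (m : ℕ) :
    √2 * ∑ j ∈ Finset.range 4, sinCubeSeq (2 * (4 * m + j) + 1) =
      1 / (8 * (m : ℝ) + 1) ^ 3 + 1 / (8 * (m : ℝ) + 3) ^ 3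
        - 1 / (8 * (m : ℝ) + 5) ^ 3 - 1 / (8 * (m : ℝ) + 7) ^ 3 := by
  have h1 : sin (π * 1 / 4) = √2 / 2 := by rw [mul_one, sin_pi_div_four]
  have h3 : sin (π * 3 / 4) = √2 / 2 := by
    rw [show π * 3 / 4 = π - π / 4 by ring, sin_pi_sub, sin_pi_div_four]
  have h5 : sin (π * 5 / 4) = -(√2 / 2) := by
    rw [show π * 5 / 4 = π / 4 + π by ring, sin_add_pi, sin_pi_div_four]
  have h7 : sin (π * 7 / 4) = -(√2 / 2) := by
    rw [show π * 7 / 4 = π - π / 4 + π by ring, sin_add_pi, sin_pi_sub, sin_pi_div_four]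
  simp only [Finset.sum_range_succ, Finset.sum_range_zero, sinCubeSeq]
  push_cast
  simp only [show ∀ r : ℝ, 2 * (4 * (m : ℝ) + r) + 1 = 8 * m + (2 * r + 1) from fun r ↦ by ring,
    sin_pi_mul_eight_mul_add_div_four]
  norm_num only [h1, h3, h5, h7]
  have hsqrt : √2 * √2 = 2 := mul_self_sqrt zero_le_two
  linear_combination (1 / (8 * (m : ℝ) + 1) ^ 3 + 1 / (8 * (m : ℝ) + 3) ^ 3
    - 1 / (8 * (m : ℝ) + 5) ^ 3 - 1 / (8 * (m : ℝ) + 7) ^ 3) / 2 * hsqrt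

theorem stmt9 :
    HasSum (fun m : ℕ =>
        1 / (8 * (m : ℝ) + 1) ^ 3 + 1 / (8 * (m : ℝ) + 3) ^ 3
          - 1 / (8 * (m : ℝ) + 5) ^ 3 - 1 / (8 * (m : ℝ) + 7) ^ 3)
      (3 * π ^ 3 * Real.sqrt 2 / 128) := by
  rw [show 3 * π ^ 3 * √2 / 128 = √2 * (3 * π ^ 3 / 128) by ring]
  simpa only [sqrt_two_mul_sum_sinCubeSeq_odd_block] using
    (hasSum_sinCubeSeq_odd.sum_range_mul_add 4).mul_left √2
end

section
/- The series 1/1⁵ + 1/3⁵ − 1/5⁵ − 1/7⁵ + 1/9⁵ + 1/11⁵ − 1/13⁵ − 1/15⁵ + ⋯, with sign pattern (+,+,−,−) on reciprocals of fifth powers of odd numbers, converges and equals 57√2·π⁵/24576. -/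
/-!
By the Fourier expansion of the Bernoulli polynomial `B₅`,
`∑ sin (2πnx) / n⁵ = -(2π)⁵ B₅(x) / 240` on `[0, 1]`. Adding the cases `x = 1/8` and `x = 3/8`,
the coefficient `sin (πn/4) + sin (3πn/4)` equals `√2 χ₈'(n)`, where `χ₈'` is the character mod 8
with sign pattern `(+, +, -, -)` on `1, 3, 5, 7`. Hence the series, grouped in blocks of eight, is
`L(5, χ₈') = -(2π)⁵ (B₅(1/8) + B₅(3/8)) / (240 √2)`, and `B₅(1/8) + B₅(3/8) = -285/8192`.
-/

open Real ZMod

theorem HasSum.sum_fin_mul_add {α : Type*} [AddCommMonoid α] [TopologicalSpace α]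
    [ContinuousAdd α] [RegularSpace α] {f : ℕ → α} {a : α} (k : ℕ) [NeZero k]
    (hf : HasSum f a) : HasSum (fun m => ∑ j : Fin k, f (m * k + j)) a :=
  ((Nat.divModEquiv k).symm.hasSum_iff.mpr hf).prod_fiberwise fun _ => hasSum_fintype _

theorem Polynomial.bernoulli_five_eval (x : ℝ) :
    ((Polynomial.bernoulli 5).map (algebraMap ℚ ℝ)).eval x
      = x ^ 5 - 5 / 2 * x ^ 4 + 5 / 3 * x ^ 3 - 1 / 6 * x := by
  norm_num [Polynomial.bernoulli, Finset.sum_range_succ, bernoulli_eq_bernoulli'_of_ne_one,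
    bernoulli'_two, bernoulli'_four, bernoulli'_eq_zero_of_odd, Nat.choose]
  ring

theorem hasSum_sin_eighth_add_sin_three_eighths :
    HasSum (fun n : ℕ => 1 / (n : ℝ) ^ 5 * (sin (2 * π * n * (1 / 8)) + sin (2 * π * n * (3 / 8))))
      (57 * π ^ 5 / 12288) := by
  have h := (hasSum_one_div_nat_pow_mul_sin two_ne_zero (x := 1 / 8) (by norm_num)).add
    (hasSum_one_div_nat_pow_mul_sin two_ne_zero (x := 3 / 8) (by norm_num))
  simp_rw [← mul_add] at h
  convert h using 1
  rw [Polynomial.bernoulli_five_eval, Polynomial.bernoulli_five_eval]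
  norm_num [Nat.factorial]
  ring

theorem sin_pi_div_four_mul_fin (r : Fin 8) :
    sin (π / 4 * (r : ℕ)) = ![0, √2 / 2, 1, √2 / 2, 0, -(√2 / 2), -1, -(√2 / 2)] r := by
  fin_cases r
  · simp
  · simp
  · simp [show π / 4 * 2 = π / 2 by ring]
  · simp [show π / 4 * 3 = π - π / 4 by ring]
  · simp [show π / 4 * 4 = π by ring]
  · simp [show π / 4 * 5 = π / 4 + π by ring, sin_add_pi]
  · simp [show π / 4 * 6 = π / 2 + π by ring, sin_add_pi]
  · simp [show π / 4 * 7 = π - π / 4 + π by ring, sin_add_pi]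

theorem sin_pi_div_four_mul_natCast (n : ℕ) :
    sin (π / 4 * n) = ![0, √2 / 2, 1, √2 / 2, 0, -(√2 / 2), -1, -(√2 / 2)] (Fin.ofNat 8 n) := by
  have hper : Function.Periodic (fun k : ℕ => sin (π / 4 * k)) 8 := fun k => by
    simp [mul_add, show π / 4 * 8 = 2 * π by ring]
  rw [← sin_pi_div_four_mul_fin, Fin.val_ofNat]
  exact (hper.map_mod_nat n).symm

theorem sin_eighth_add_sin_three_eighths (n : ℕ) :
    sin (2 * π * n * (1 / 8)) + sin (2 * π * n * (3 / 8)) = √2 * χ₈' n := by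
  have h1 : 2 * π * n * (1 / 8) = π / 4 * n := by ring
  have h3 : 2 * π * n * (3 / 8) = π / 4 * (3 * n : ℕ) := by push_cast; ring
  have h3n : Fin.ofNat 8 (3 * n) = 3 * Fin.ofNat 8 n := by ext; simp [Fin.val_mul, Nat.mul_mod]
  rw [h1, h3, sin_pi_div_four_mul_natCast, sin_pi_div_four_mul_natCast, h3n,
    ← ZMod.natCast_mod n 8, ← Fin.val_ofNat]
  generalize Fin.ofNat 8 n = r
  fin_cases r <;> simp <;> ring

theorem hasSum_χ₈'_div_pow_five :
    HasSum (fun n : ℕ => (χ₈' n : ℝ) / n ^ 5) (57 * √2 * π ^ 5 / 24576) := by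
  have h := hasSum_sin_eighth_add_sin_three_eighths
  simp_rw [sin_eighth_add_sin_three_eighths] at h
  rw [show 57 * π ^ 5 / 12288 = √2 * (57 * √2 * π ^ 5 / 24576) by
    linear_combination -57 * π ^ 5 / 24576 * mul_self_sqrt zero_le_two] at h
  have hterm : (fun n : ℕ => 1 / (n : ℝ) ^ 5 * (√2 * χ₈' n))
      = fun n : ℕ => √2 * ((χ₈' n : ℝ) / n ^ 5) := by
    ext n
    ring
  rw [hterm] at h
  exact (hasSum_mul_left_iff (sqrt_ne_zero'.mpr zero_lt_two)).mp h

theorem χ₈'_natCast_mul_eight_add (m j : ℕ) : χ₈' ((m * 8 + j : ℕ) : ZMod 8) = χ₈' j := by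
  rw [Nat.cast_add, Nat.cast_mul, show ((8 : ℕ) : ZMod 8) = 0 from rfl, mul_zero, zero_add]

theorem stmt10 :
    HasSum (fun m : ℕ =>
        1 / (8 * (m : ℝ) + 1) ^ 5 + 1 / (8 * (m : ℝ) + 3) ^ 5
          - 1 / (8 * (m : ℝ) + 5) ^ 5 - 1 / (8 * (m : ℝ) + 7) ^ 5)
      (57 * Real.sqrt 2 * π ^ 5 / 24576) := by
  convert hasSum_χ₈'_div_pow_five.sum_fin_mul_add 8 using 2 with m
  simp only [Fin.sum_univ_eight, χ₈'_natCast_mul_eight_add]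
  simp only [Fin.isValue, Fin.coe_ofNat_eq_mod, Nat.reduceMod, Nat.zero_mod, Nat.one_mod,
    Nat.mod_succ, χ₈'_apply, Nat.cast_add, Nat.cast_mul, Nat.cast_ofNat, Nat.cast_zero,
    Nat.cast_one, Int.reduceNeg, Int.cast_neg, Int.cast_zero, Int.cast_one]
  ring
end

section
/- The series 1 + 1/2 + 1/3 − 1/4 − 1/5 − 1/6 + 1/7 + 1/8 + 1/9 − ⋯, with signs alternating in blocks of three on consecutive integer reciprocals, converges and equals 2π/(3√3) + (ln 2)/3. -/
/-!
Since `1 / (3m + k) = ∫₀¹ x ^ (3m + k - 1)`, the `m`-th block is `∫₀¹ (1 + x + x²) (-x³)ᵐ`, and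
summing the geometric series leaves `∫₀¹ (1 + x + x²) / (1 + x³)` minus a remainder of size at
most `3 / (3N + 1)`. The partial fraction decomposition
`(1 + x + x²) / (1 + x³) = (1/3) / (1 + x) + (1/3) (2x - 1) / (x² - x + 1) + 1 / (x² - x + 1)`
gives the primitive `cubicPrimitive`, whose increment over `[0, 1]` is `log 2 / 3 + 2π / (3√3)`.
-/

open Real Filter intervalIntegral

noncomputable def cubicPrimitive (x : ℝ) : ℝ :=
  log (1 + x) / 3 + log (x ^ 2 - x + 1) / 3 + 2 / √3 * arctan ((2 * x - 1) / √3)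

lemma sq_sub_self_add_one_pos (x : ℝ) : 0 < x ^ 2 - x + 1 := by
  nlinarith [sq_nonneg (x - 1 / 2)]

lemma hasDerivAt_cubicPrimitive {x : ℝ} (hx : x ≠ -1) :
    HasDerivAt cubicPrimitive ((1 + x + x ^ 2) / (1 + x ^ 3)) x := by
  have hlin : HasDerivAt (fun y : ℝ => 1 + y) 1 x := (hasDerivAt_id x).const_add 1
  have hquad : HasDerivAt (fun y : ℝ => y ^ 2 - y + 1) (2 * x - 1) x := by
    simpa using ((hasDerivAt_pow 2 x).sub (hasDerivAt_id x)).add_const 1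
  have hatan : HasDerivAt (fun y : ℝ => (2 * y - 1) / √3) (2 / √3) x := by
    simpa using (((hasDerivAt_id x).const_mul 2).sub_const 1).div_const √3
  have hlin0 : 1 + x ≠ 0 := fun h => hx (by linarith)
  have hquad0 := (sq_sub_self_add_one_pos x).ne'
  refine ((((hlin.log hlin0).div_const 3).add ((hquad.log hquad0).div_const 3)).add
    (hatan.arctan.const_mul (2 / √3))).congr_deriv ?_
  have hs : √3 ^ 2 = 3 := sq_sqrt (by norm_num)
  have hcube : 1 + x ^ 3 = (1 + x) * (x ^ 2 - x + 1) := by ring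
  have hnorm : 1 + ((2 * x - 1) / √3) ^ 2 = 4 * (x ^ 2 - x + 1) / 3 := by
    rw [div_pow, hs]; ring
  have hs' : 2 / √3 * (2 / √3) = 4 / 3 := by rw [← sq, div_pow, hs]; norm_num
  rw [hnorm, hcube, mul_comm (1 / _), ← mul_assoc, hs']
  -- hide the quadratic factor so that `field_simp` treats it as an atom known to be nonzero
  generalize hq : x ^ 2 - x + 1 = q at *
  field_simp
  linear_combination -hq

lemma integral_pow_zero_one (n : ℕ) : ∫ x in (0 : ℝ)..1, x ^ n = 1 / (n + 1) := by
  simp [integral_pow]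

lemma continuousOn_div_one_add_cube {f : ℝ → ℝ} (hf : Continuous f) :
    ContinuousOn (fun x => f x / (1 + x ^ 3)) (Set.uIcc 0 1) := by
  refine hf.continuousOn.div (by fun_prop) fun x hx => ?_
  rw [Set.uIcc_of_le zero_le_one] at hx
  have := hx.1
  positivity

lemma integral_one_add_add_sq_div_one_add_cube :
    ∫ x in (0 : ℝ)..1, (1 + x + x ^ 2) / (1 + x ^ 3) = 2 * π / (3 * √3) + log 2 / 3 := by
  have hderiv : ∀ x ∈ Set.uIcc (0 : ℝ) 1,
      HasDerivAt cubicPrimitive ((1 + x + x ^ 2) / (1 + x ^ 3)) x := fun x hx => by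
    rw [Set.uIcc_of_le zero_le_one] at hx
    exact hasDerivAt_cubicPrimitive (by linarith [hx.1])
  rw [integral_eq_sub_of_hasDerivAt hderiv
    (continuousOn_div_one_add_cube (by fun_prop)).intervalIntegrable]
  have hneg : (2 * 0 - 1) / √3 = -(√3)⁻¹ := by ring
  simp only [cubicPrimitive, hneg, arctan_neg, arctan_inv_sqrt_three]
  norm_num
  field_simp
  ring

lemma integral_block (m : ℕ) :
    ∫ x in (0 : ℝ)..1, (1 + x + x ^ 2) * (-x ^ 3) ^ m
      = (-1) ^ m * (1 / (3 * (m : ℝ) + 1) + 1 / (3 * (m : ℝ) + 2)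
        + 1 / (3 * (m : ℝ) + 3)) := by
  have hexpand : ∀ x : ℝ, (1 + x + x ^ 2) * (-x ^ 3) ^ m
      = (-1) ^ m * (x ^ (3 * m) + x ^ (3 * m + 1) + x ^ (3 * m + 2)) := fun x => by
    rw [neg_pow, ← pow_mul]; ring
  have hint : ∀ n : ℕ, IntervalIntegrable (fun x : ℝ => x ^ n) MeasureTheory.volume 0 1 :=
    fun n => (continuous_pow n).intervalIntegrable 0 1
  simp_rw [hexpand]
  rw [integral_const_mul, integral_add ((hint _).add (hint _)) (hint _),
    integral_add (hint _) (hint _), integral_pow_zero_one, integral_pow_zero_one,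
    integral_pow_zero_one]
  push_cast
  ring_nf

lemma sum_block_eq_sub_integral (N : ℕ) :
    ∑ m ∈ Finset.range N, (-1 : ℝ) ^ m * (1 / (3 * (m : ℝ) + 1) + 1 / (3 * (m : ℝ) + 2)
        + 1 / (3 * (m : ℝ) + 3))
      = (∫ x in (0 : ℝ)..1, (1 + x + x ^ 2) / (1 + x ^ 3))
        - ∫ x in (0 : ℝ)..1, (1 + x + x ^ 2) * (-x ^ 3) ^ N / (1 + x ^ 3) := by
  simp_rw [← integral_block]
  have hlimit := continuousOn_div_one_add_cube (f := fun x => 1 + x + x ^ 2) (by fun_prop)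
  have hremainder := continuousOn_div_one_add_cube
    (f := fun x => (1 + x + x ^ 2) * (-x ^ 3) ^ N) (by fun_prop)
  beta_reduce at hlimit hremainder
  rw [← integral_finsetSum fun m _ => (by fun_prop : Continuous fun x : ℝ =>
      (1 + x + x ^ 2) * (-x ^ 3) ^ m).intervalIntegrable 0 1,
    ← integral_sub hlimit.intervalIntegrable hremainder.intervalIntegrable]
  refine integral_congr fun x hx => ?_
  rw [Set.uIcc_of_le zero_le_one] at hx
  have hpos : 0 < 1 + x ^ 3 := by have := hx.1; positivity
  rw [← Finset.mul_sum, geom_sum_eq (by linarith : -x ^ 3 ≠ 1),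
    show -x ^ 3 - 1 = -(1 + x ^ 3) by ring]
  field_simp
  ring

lemma norm_integral_remainder_le (N : ℕ) :
    ‖∫ x in (0 : ℝ)..1, (1 + x + x ^ 2) * (-x ^ 3) ^ N / (1 + x ^ 3)‖
      ≤ 3 / (3 * (N : ℝ) + 1) := by
  have hdom : ∀ x ∈ Set.Ioc (0 : ℝ) 1,
      ‖(1 + x + x ^ 2) * (-x ^ 3) ^ N / (1 + x ^ 3)‖ ≤ 3 * x ^ (3 * N) := by
    rintro x ⟨hx0, hx1⟩
    have hcube : 1 ≤ 1 + x ^ 3 := by have := pow_nonneg hx0.le 3; linarith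
    have hnum : 1 + x + x ^ 2 ≤ 3 := by nlinarith
    rw [norm_div, norm_mul, norm_pow, norm_neg, norm_pow, Real.norm_of_nonneg hx0.le,
      Real.norm_of_nonneg (by positivity), Real.norm_of_nonneg (by positivity), pow_mul]
    calc (1 + x + x ^ 2) * (x ^ 3) ^ N / (1 + x ^ 3) ≤ (1 + x + x ^ 2) * (x ^ 3) ^ N :=
          div_le_self (by positivity) hcube
      _ ≤ 3 * (x ^ 3) ^ N := by gcongr
  calc _ ≤ ∫ x in (0 : ℝ)..1, 3 * x ^ (3 * N) :=
        norm_integral_le_of_norm_le zero_le_one (.of_forall hdom)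
          ((continuous_const.mul (continuous_pow _)).intervalIntegrable 0 1)
    _ = 3 / (3 * (N : ℝ) + 1) := by
        rw [integral_const_mul, integral_pow_zero_one]; push_cast; ring

theorem stmt12 :
    Tendsto (fun N : ℕ => ∑ m ∈ Finset.range N,
        (-1 : ℝ) ^ m * (1 / (3 * (m : ℝ) + 1) + 1 / (3 * (m : ℝ) + 2)
          + 1 / (3 * (m : ℝ) + 3)))
      atTop (nhds (2 * π / (3 * Real.sqrt 3) + Real.log 2 / 3)) := by
  simp_rw [sum_block_eq_sub_integral, ← integral_one_add_add_sq_div_one_add_cube]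
  have hremainder : Tendsto (fun N : ℕ =>
      ∫ x in (0 : ℝ)..1, (1 + x + x ^ 2) * (-x ^ 3) ^ N / (1 + x ^ 3)) atTop (nhds 0) :=
    squeeze_zero_norm norm_integral_remainder_le <| tendsto_const_nhds.div_atTop <|
      tendsto_atTop_mono (fun N => by linarith) tendsto_natCast_atTop_atTop
  simpa using hremainder.const_sub (∫ x in (0 : ℝ)..1, (1 + x + x ^ 2) / (1 + x ^ 3))
end

section
/- The series 1 + 1/2 + 1/3 + 1/4 − 1/5 − 1/6 − 1/7 − 1/8 + ⋯, with signs alternating in blocks of four on consecutive integer reciprocals, converges and equals π(1 + 2√2)/8 + (ln 2)/4. -/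
/-!
Since `1 / (n + 1) = ∫₀¹ xⁿ dx`, the `m`-th block is `∫₀¹ (1 + x + x² + x³) x^(4m) dx`, and summing
the alternating geometric series under the integral turns the `N`-th partial sum into
`∫₀¹ (1 + x + x² + x³) (1 - (-x⁴)^N) / (1 + x⁴) dx`. The error term is `O(1/N)`, so the series
converges to `∫₀¹ (1 + x + x² + x³) / (1 + x⁴) dx`, which partial fractions evaluate in closed form.
-/

open Real Filter Topology Finset intervalIntegral MeasureTheory

lemma tendsto_integral_mul_pow_atTop {f : ℝ → ℝ} (hf : ContinuousOn f (Set.Icc 0 1)) :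
    Tendsto (fun n : ℕ => ∫ x in (0 : ℝ)..1, f x * x ^ n) atTop (𝓝 0) := by
  obtain ⟨C, hC⟩ := isCompact_Icc.exists_bound_of_continuousOn hf
  have hbound (n : ℕ) : ‖∫ x in (0 : ℝ)..1, f x * x ^ n‖ ≤ C * (1 / ((n : ℝ) + 1)) :=
    calc ‖∫ x in (0 : ℝ)..1, f x * x ^ n‖ ≤ ∫ x in (0 : ℝ)..1, C * x ^ n := by
          refine norm_integral_le_of_norm_le zero_le_one (.of_forall fun x hx => ?_)
            ((continuous_const.mul (continuous_pow n)).intervalIntegrable 0 1)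
          rw [norm_mul, norm_pow, Real.norm_of_nonneg hx.1.le]
          exact mul_le_mul_of_nonneg_right (hC x (Set.Ioc_subset_Icc_self hx))
            (pow_nonneg hx.1.le n)
      _ = C * (1 / ((n : ℝ) + 1)) := by simp [integral_pow]
  exact squeeze_zero_norm hbound
    (by simpa using tendsto_one_div_add_atTop_nhds_zero_nat.const_mul C)

lemma integral_geom_sum_mul_pow (k m : ℕ) :
    ∫ x in (0 : ℝ)..1, (∑ j ∈ range k, x ^ j) * x ^ (k * m) =
      ∑ j ∈ range k, 1 / ((k : ℝ) * m + j + 1) := by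
  simp_rw [Finset.sum_mul, ← pow_add]
  rw [integral_finsetSum fun j _ => (continuous_pow _).intervalIntegrable 0 1]
  simp [integral_pow, add_comm]

lemma geom_sum_neg_eq {t : ℝ} (ht : 1 + t ≠ 0) (N : ℕ) :
    ∑ m ∈ range N, (-t) ^ m = (1 - (-t) ^ N) / (1 + t) := by
  rw [eq_div_iff ht, ← mul_neg_geom_sum, mul_comm, sub_neg_eq_add]

/- The three terms integrate `(1 + x²) / (1 + x⁴)`, `x / (1 + x⁴)` and `x³ / (1 + x⁴)`. -/
lemma hasDerivAt_quartic_antideriv (x : ℝ) :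
    HasDerivAt (fun x => √2 / 2 * (arctan (√2 * x + 1) + arctan (√2 * x - 1)) +
        arctan (x ^ 2) / 2 + log (1 + x ^ 4) / 4)
      ((1 + x + x ^ 2 + x ^ 3) / (1 + x ^ 4)) x := by
  have hlin : HasDerivAt (fun y => √2 * y) √2 x := by simpa using (hasDerivAt_id x).const_mul √2
  have H := ((((hlin.add_const 1).arctan.add (hlin.sub_const 1).arctan).const_mul (√2 / 2)).add
    ((hasDerivAt_pow 2 x).arctan.div_const 2)).add
    ((((hasDerivAt_pow 4 x).const_add 1).log (by positivity)).div_const 4)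
  refine H.congr_deriv ?_
  have s2 : √2 ^ 2 = 2 := sq_sqrt zero_le_two
  field_simp
  ring_nf
  rw [s2, show √2 ^ 4 = (√2 ^ 2) ^ 2 by ring, s2]
  ring

lemma arctan_sqrt_two_sub_one_add_arctan_sqrt_two_add_one :
    arctan (√2 - 1) + arctan (√2 + 1) = π / 2 := by
  have hinv : √2 - 1 = (√2 + 1)⁻¹ := by
    refine eq_inv_of_mul_eq_one_left ?_
    linear_combination sq_sqrt zero_le_two
  rw [hinv, arctan_inv_of_pos (by positivity), sub_add_cancel]

lemma integral_quartic :
    ∫ x in (0 : ℝ)..1, (1 + x + x ^ 2 + x ^ 3) / (1 + x ^ 4) =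
      π * (1 + 2 * √2) / 8 + log 2 / 4 := by
  rw [integral_eq_sub_of_hasDerivAt (fun x _ => hasDerivAt_quartic_antideriv x)
    (Continuous.intervalIntegrable (by fun_prop (disch := intro x; positivity)) 0 1)]
  have := arctan_sqrt_two_sub_one_add_arctan_sqrt_two_add_one
  norm_num [arctan_one]
  linear_combination √2 / 2 * this

lemma one_add_pow_pos {x : ℝ} (hx : x ∈ Set.Icc (0 : ℝ) 1) (k : ℕ) : 0 < 1 + x ^ k := by
  have := pow_nonneg hx.1 k; linarith

lemma ContinuousOn.div_one_add_pow {f : ℝ → ℝ} (hf : ContinuousOn f (Set.Icc 0 1)) (k : ℕ) :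
    ContinuousOn (fun x => f x / (1 + x ^ k)) (Set.Icc 0 1) :=
  hf.div (by fun_prop) fun x hx => (one_add_pow_pos hx k).ne'

lemma sum_neg_one_pow_mul_integral_mul_pow {f : ℝ → ℝ} (hf : ContinuousOn f (Set.Icc 0 1))
    (k N : ℕ) :
    ∑ m ∈ range N, (-1) ^ m * ∫ x in (0 : ℝ)..1, f x * x ^ (k * m) =
      (∫ x in (0 : ℝ)..1, f x / (1 + x ^ k)) -
        (-1) ^ N * ∫ x in (0 : ℝ)..1, f x / (1 + x ^ k) * x ^ (k * N) := by
  have hterm (x : ℝ) (hx : x ∈ Set.uIcc 0 1) : ∑ m ∈ range N, (-1) ^ m * (f x * x ^ (k * m)) =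
      f x / (1 + x ^ k) - (-1) ^ N * (f x / (1 + x ^ k) * x ^ (k * N)) := by
    rw [Set.uIcc_of_le zero_le_one] at hx
    calc ∑ m ∈ range N, (-1) ^ m * (f x * x ^ (k * m))
        = f x * ∑ m ∈ range N, (-x ^ k) ^ m := by
          rw [mul_sum]; refine sum_congr rfl fun m _ => ?_; rw [neg_pow, pow_mul]; ring
      _ = f x * ((1 - (-x ^ k) ^ N) / (1 + x ^ k)) := by
          rw [geom_sum_neg_eq (one_add_pow_pos hx k).ne']
      _ = f x / (1 + x ^ k) - (-1) ^ N * (f x / (1 + x ^ k) * x ^ (k * N)) := by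
          rw [neg_pow, pow_mul]; ring
  have hg := hf.div_one_add_pow k
  simp_rw [← intervalIntegral.integral_const_mul]
  rw [← integral_finsetSum fun m _ => (by fun_prop : ContinuousOn _ _).intervalIntegrable_of_Icc
      zero_le_one, integral_congr hterm,
    integral_sub (hg.intervalIntegrable_of_Icc zero_le_one)
      ((by fun_prop : ContinuousOn _ _).intervalIntegrable_of_Icc zero_le_one)]

theorem tendsto_sum_neg_one_pow_mul_integral_mul_pow {f : ℝ → ℝ}
    (hf : ContinuousOn f (Set.Icc 0 1)) {k : ℕ} (hk : 0 < k) :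
    Tendsto (fun N : ℕ => ∑ m ∈ range N, (-1) ^ m * ∫ x in (0 : ℝ)..1, f x * x ^ (k * m)) atTop
      (𝓝 (∫ x in (0 : ℝ)..1, f x / (1 + x ^ k))) := by
  have hdecay := (tendsto_integral_mul_pow_atTop (hf.div_one_add_pow k)).comp
    (tendsto_id.const_mul_atTop' hk)
  have htail : Tendsto (fun N : ℕ => (-1 : ℝ) ^ N *
      ∫ x in (0 : ℝ)..1, f x / (1 + x ^ k) * x ^ (k * N)) atTop (𝓝 0) :=
    squeeze_zero_norm (fun N => by simp) (tendsto_zero_iff_norm_tendsto_zero.mp hdecay)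
  simpa [sum_neg_one_pow_mul_integral_mul_pow hf] using tendsto_const_nhds.sub htail

theorem tendsto_sum_neg_one_pow_sum_inv {k : ℕ} (hk : 0 < k) :
    Tendsto (fun N : ℕ => ∑ m ∈ range N, (-1) ^ m * ∑ j ∈ range k, 1 / ((k : ℝ) * m + j + 1))
      atTop (𝓝 (∫ x in (0 : ℝ)..1, (∑ j ∈ range k, x ^ j) / (1 + x ^ k))) := by
  simpa only [integral_geom_sum_mul_pow] using
    tendsto_sum_neg_one_pow_mul_integral_mul_pow
      (f := fun x => ∑ j ∈ range k, x ^ j) (by fun_prop) hk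

theorem stmt13 :
    Tendsto (fun N : ℕ => ∑ m ∈ Finset.range N,
        (-1 : ℝ) ^ m * (1 / (4 * (m : ℝ) + 1) + 1 / (4 * (m : ℝ) + 2)
          + 1 / (4 * (m : ℝ) + 3) + 1 / (4 * (m : ℝ) + 4)))
      atTop (nhds (π * (1 + 2 * Real.sqrt 2) / 8 + Real.log 2 / 4)) := by
  have h := tendsto_sum_neg_one_pow_sum_inv (k := 4) four_pos
  rw [← integral_quartic]
  convert h using 5
  · simp only [sum_range_succ, range_one, sum_singleton, Nat.cast_ofNat, Nat.cast_one,
      CharP.cast_eq_zero]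
    ring
  · simp only [sum_range_succ, range_one, sum_singleton, pow_zero, pow_one]
end

section
/- For every real x with −1 < x < 1, the series 1/(1+x)² + 1/(3−x)² + 1/(5+x)² + 1/(7−x)² + ⋯ converges and equals π²/(8(1 + sin(πx/2))). -/
/-!
Parseval's identity for `t ↦ exp (-2πiat)` on `(0, 1]`, whose Fourier coefficients are
`(1 - exp (-2πia)) / (2πi (n + a))`, gives `∑_{n ∈ ℤ} 1 / (n + a)² = π² / sin² (πa)` for
non-integral `a`. For `a = (1 + x) / 4` the terms `1 / (4m + 1 + x)²`, `m ∈ ℤ`, are those of the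
series, its term of index `2k` coming from `m = k` and that of index `2k + 1` from `m = -(k + 1)`;
finally `2 sin² (π/4 + πx/4) = 1 + sin (πx/2)`.
-/

open Real MeasureTheory

theorem HasSum.of_int_interleave {G : Type*} [AddCommGroup G] [UniformSpace G]
    [IsUniformAddGroup G] [CompleteSpace G] [T2Space G] {g : ℤ → G} {s : G} (hg : HasSum g s)
    {f : ℕ → G} (h_even : ∀ k : ℕ, f (2 * k) = g k)
    (h_odd : ∀ k : ℕ, f (2 * k + 1) = g (-(k + 1))) :
    HasSum f s := by
  have h_nat : Summable fun k : ℕ => g k := hg.summable.comp_injective Nat.cast_injective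
  have h_neg : Summable fun k : ℕ => g (-(k + 1)) :=
    hg.summable.comp_injective fun _ _ h => by simpa using h
  rw [hg.unique (h_nat.hasSum.of_nat_of_neg_add_one h_neg.hasSum)]
  exact HasSum.even_add_odd (by simpa only [h_even] using h_nat.hasSum)
    (by simpa only [h_odd] using h_neg.hasSum)

open Complex in
theorem fourierCoeffOn_exp_mul {a : ℝ} (ha : ∀ n : ℤ, a ≠ n) (n : ℤ) :
    fourierCoeffOn zero_lt_one (fun t : ℝ => cexp (-2 * π * I * a * t)) n
      = (1 - cexp (-2 * π * I * a)) / (2 * π * I * (n + a)) := by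
  have hna : (n : ℂ) + a ≠ 0 := by
    exact_mod_cast fun h => ha (-n) (by push_cast; linarith)
  have hc : -2 * π * I * (n + a) ≠ 0 := by simp [hna, pi_ne_zero, I_ne_zero]
  have h_integrand : ∀ t : ℝ,
      fourier (-n) (t : AddCircle ((1 : ℝ) - 0)) • cexp (-2 * π * I * a * t)
        = cexp (-2 * π * I * (n + a) * t) := fun t => by
    rw [fourier_coe_apply, smul_eq_mul, ← Complex.exp_add]
    push_cast
    ring_nf
  have h_period : cexp (-2 * π * I * (n + a)) = cexp (-2 * π * I * a) := by
    rw [show -2 * π * I * (n + a) = -2 * π * I * a + (-n : ℤ) * (2 * π * I) by push_cast; ring,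
      Complex.exp_add, exp_int_mul_two_pi_mul_I, mul_one]
  rw [fourierCoeffOn_eq_integral]
  simp_rw [h_integrand]
  rw [integral_exp_mul_complex hc]
  simp only [sub_zero, div_one, one_smul, Complex.ofReal_one, Complex.ofReal_zero, mul_one,
    mul_zero, Complex.exp_zero, h_period]
  field_simp
  ring

open Complex in
theorem norm_fourierCoeffOn_exp_mul_sq {a : ℝ} (ha : ∀ n : ℤ, a ≠ n) (n : ℤ) :
    ‖fourierCoeffOn zero_lt_one (fun t : ℝ => cexp (-2 * π * I * a * t)) n‖ ^ 2
      = Real.sin (π * a) ^ 2 / π ^ 2 * (1 / (n + a) ^ 2) := by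
  have h_num : ‖1 - cexp (-2 * π * I * a)‖ = |2 * Real.sin (π * a)| := by
    rw [norm_sub_rev, show -2 * π * I * a = I * ((-2 * π * a : ℝ) : ℂ) by push_cast; ring,
      norm_exp_I_mul_ofReal_sub_one, Real.norm_eq_abs,
      show -2 * π * a / 2 = -(π * a) by ring, Real.sin_neg, mul_neg, abs_neg]
  have h_den : ‖2 * π * I * ((n : ℂ) + a)‖ = 2 * π * |n + a| := by
    rw [show 2 * π * I * ((n : ℂ) + a) = ((2 * π * (n + a) : ℝ) : ℂ) * I by push_cast; ring,
      norm_mul, norm_I, mul_one, norm_real, Real.norm_eq_abs, abs_mul, abs_of_pos two_pi_pos]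
  have hna : (n : ℝ) + a ≠ 0 := fun h => ha (-n) (by push_cast; linarith)
  rw [fourierCoeffOn_exp_mul ha, norm_div, h_num, h_den, div_pow, mul_pow, mul_pow, sq_abs, sq_abs]
  field_simp

open Complex in
theorem hasSum_one_div_int_add_sq {a : ℝ} (ha : ∀ n : ℤ, a ≠ n) :
    HasSum (fun n : ℤ => 1 / (n + a) ^ 2) (π ^ 2 / Real.sin (π * a) ^ 2) := by
  have hf_norm : ∀ t : ℝ, ‖cexp (-2 * π * I * a * t)‖ = 1 := fun t => by
    rw [norm_exp]
    simp
  have hf_L2 :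
      MemLp (fun t : ℝ => cexp (-2 * π * I * a * t)) 2 (volume.restrict (Set.Ioc 0 1)) :=
    .of_bound (by fun_prop) 1 (.of_forall fun t => (hf_norm t).le)
  have h_parseval := hasSum_sq_fourierCoeffOn zero_lt_one hf_L2
  simp only [hf_norm, one_pow, intervalIntegral.integral_const, sub_zero, inv_one,
    smul_eq_mul, mul_one, norm_fourierCoeffOn_exp_mul_sq ha] at h_parseval
  have hsin : Real.sin (π * a) ≠ 0 := fun h => by
    obtain ⟨n, hn⟩ := Real.sin_eq_zero_iff.mp h
    exact ha n (by nlinarith [pi_pos])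
  have hc : Real.sin (π * a) ^ 2 / π ^ 2 ≠ 0 := by positivity
  rwa [← one_div_div, ← hasSum_mul_left_iff hc, mul_one_div_cancel hc]

theorem Real.two_mul_sin_sq_pi_div_four_add (y : ℝ) :
    2 * sin (π / 4 + y / 2) ^ 2 = 1 + sin y := by
  rw [sin_sq_eq_half_sub, show 2 * (π / 4 + y / 2) = y + π / 2 by ring, cos_add_pi_div_two]
  ring

theorem stmt16 (x : ℝ) (hx : -1 < x) (hx' : x < 1) :
    HasSum (fun n : ℕ => 1 / ((2 * (n : ℝ) + 1) + (-1 : ℝ) ^ n * x) ^ 2)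
      (π ^ 2 / (8 * (1 + Real.sin (π * x / 2)))) := by
  have ha : ∀ n : ℤ, (1 + x) / 4 ≠ n := fun n hn => by
    have h0 : (0 : ℝ) < n := by linarith
    have h1 : (n : ℝ) < 1 := by linarith
    norm_cast at h0 h1
    omega
  have h_sin : Real.sin (π * ((1 + x) / 4)) ^ 2 * 16 = 8 * (1 + Real.sin (π * x / 2)) := by
    rw [show π * ((1 + x) / 4) = π / 4 + π * x / 2 / 2 by ring,
      ← two_mul_sin_sq_pi_div_four_add]
    ring
  have h_int := (hasSum_one_div_int_add_sq ha).div_const 16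
  rw [div_div, h_sin] at h_int
  refine h_int.of_int_interleave (fun k => ?_) (fun k => ?_)
  · rw [pow_mul, neg_one_sq, one_pow, div_div]
    push_cast
    ring
  · rw [pow_succ (-1 : ℝ), pow_mul, neg_one_sq, one_pow, div_div]
    push_cast
    ring
end

section
/- For every real x with 0 < |x| < 1, the series 1/x² + ∑_{n=1}^{∞} [1/(2n−x)² + 1/(2n+x)²] converges and equals π² cos(πx/2)(1 + (sec(πx/2) + tan(πx/2))²) / (8 sin²(πx/2)(sec(πx/2) + tan(πx/2))). -/
/-!
Parseval's identity for `t ↦ exp (2πiat)` on `(0, 1]`, whose Fourier coefficients are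
`(exp (2πia) - 1) / (2πi (a - n))`, gives `∑_{n ∈ ℤ} 1 / (a + n)² = π² / sin² (πa)`.
Taking `a = x / 2` and folding the sum over `ℤ` onto `ℕ`, the series equals
`π² / (4 sin² (πx/2))`; the stated closed form reduces to this because
`cos θ (1 + (sec θ + tan θ)²) = 2 (sec θ + tan θ)`.
-/

open Real

theorem fourierCoeffOn_exp_mul_I (a : ℝ) {n : ℤ} (hn : (n : ℝ) ≠ a) :
    fourierCoeffOn zero_lt_one (fun t : ℝ => Complex.exp (2 * π * a * t * Complex.I)) n
      = (Complex.exp (2 * π * a * Complex.I) - 1) / (2 * π * (a - n) * Complex.I) := by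
  have hc : 2 * π * ((a : ℂ) - n) * Complex.I ≠ 0 := by
    have : (a : ℂ) - n ≠ 0 := by exact_mod_cast sub_ne_zero.mpr hn.symm
    simp [this, pi_ne_zero]
  rw [fourierCoeffOn_eq_integral]
  have hint (t : ℝ) :
      fourier (-n) (t : AddCircle ((1 : ℝ) - 0)) • Complex.exp (2 * π * a * t * Complex.I)
        = Complex.exp (2 * π * (a - n) * Complex.I * t) := by
    rw [fourier_coe_apply, smul_eq_mul, ← Complex.exp_add]
    push_cast
    ring_nf
  simp_rw [hint, integral_exp_mul_complex hc]
  rw [show 2 * π * ((a : ℂ) - n) * Complex.I * ((1 : ℝ) : ℂ)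
      = 2 * π * a * Complex.I + (-n : ℤ) * (2 * π * Complex.I) by push_cast; ring,
    Complex.exp_add, Complex.exp_int_mul_two_pi_mul_I]
  simp

theorem norm_exp_two_pi_mul_I_sub_one (a : ℝ) :
    ‖Complex.exp (2 * π * a * Complex.I) - 1‖ = 2 * |sin (π * a)| := by
  rw [show (2 * π * a * Complex.I : ℂ) = Complex.I * ((2 * π * a : ℝ) : ℂ) by push_cast; ring,
    Complex.norm_exp_I_mul_ofReal_sub_one, norm_mul, Real.norm_eq_abs, Real.norm_eq_abs, abs_two]
  ring_nf

theorem norm_fourierCoeffOn_exp_mul_I_sq (a : ℝ) {n : ℤ} (hn : (n : ℝ) ≠ a) :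
    ‖fourierCoeffOn zero_lt_one (fun t : ℝ => Complex.exp (2 * π * a * t * Complex.I)) n‖ ^ 2
      = sin (π * a) ^ 2 / π ^ 2 * (1 / (a - n) ^ 2) := by
  have hden : ‖2 * π * ((a : ℂ) - n) * Complex.I‖ = 2 * π * |a - n| := by
    rw [show ((a : ℂ) - n) = ((a - n : ℝ) : ℂ) by push_cast; ring]
    rw [norm_mul, norm_mul, norm_mul, Complex.norm_I, Complex.norm_real, Complex.norm_real,
      Complex.norm_ofNat, Real.norm_eq_abs, Real.norm_eq_abs, abs_of_pos pi_pos, mul_one]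
  rw [fourierCoeffOn_exp_mul_I a hn, norm_div, norm_exp_two_pi_mul_I_sub_one, hden, div_pow,
    mul_pow, mul_pow, sq_abs, sq_abs]
  have : a - n ≠ 0 := sub_ne_zero.mpr hn.symm
  field_simp

theorem hasSum_one_div_add_intCast_sq {a : ℝ} (ha : sin (π * a) ≠ 0) :
    HasSum (fun n : ℤ => 1 / (a + n) ^ 2) (π ^ 2 / sin (π * a) ^ 2) := by
  set f : ℝ → ℂ := fun t => Complex.exp (2 * π * a * t * Complex.I)
  have hf_norm (t : ℝ) : ‖f t‖ = 1 := by
    simpa using Complex.norm_exp_ofReal_mul_I (2 * π * a * t)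
  have hf_L2 : MeasureTheory.MemLp f 2 (MeasureTheory.volume.restrict (Set.Ioc 0 1)) :=
    .of_bound (by fun_prop : Continuous f).aestronglyMeasurable 1 (.of_forall (hf_norm · |>.le))
  have hparseval : HasSum (fun n => ‖fourierCoeffOn zero_lt_one f n‖ ^ 2) 1 := by
    simpa [hf_norm] using hasSum_sq_fourierCoeffOn zero_lt_one hf_L2
  have hn (n : ℤ) : (n : ℝ) ≠ a := by
    rintro rfl
    exact ha (by rw [mul_comm]; exact sin_int_mul_pi n)
  simp only [f, norm_fourierCoeffOn_exp_mul_I_sq a (hn _)] at hparseval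
  have hsub : HasSum (fun n : ℤ => 1 / (a - n) ^ 2) (π ^ 2 / sin (π * a) ^ 2) := by
    have hcancel : π ^ 2 / sin (π * a) ^ 2 * (sin (π * a) ^ 2 / π ^ 2) = 1 := by
      field_simp
    have h := hparseval.mul_left (π ^ 2 / sin (π * a) ^ 2)
    simp_rw [← mul_assoc, hcancel, one_mul, mul_one] at h
    exact h
  simpa [Function.comp_def, sub_eq_add_neg] using (Equiv.neg ℤ).hasSum_iff.mpr hsub

theorem HasSum.nat_ite_zero_add_neg {G : Type*} [AddCommGroup G] [TopologicalSpace G]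
    [IsTopologicalAddGroup G] {f : ℤ → G} {s : G} (hf : HasSum f s) :
    HasSum (fun n : ℕ => if n = 0 then f 0 else f n + f (-n)) s := by
  convert hf.nat_add_neg.sub (hasSum_ite_eq 0 (f 0)) using 1
  · ext n
    split_ifs with hn <;> simp [hn]
  · simp

theorem cos_mul_one_add_sec_add_tan_sq {θ : ℝ} (hθ : cos θ ≠ 0) :
    cos θ * (1 + (1 / cos θ + tan θ) ^ 2) = 2 * (1 / cos θ + tan θ) := by
  rw [tan_eq_sin_div_cos]
  field_simp
  linear_combination sin_sq_add_cos_sq θ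

theorem stmt17 (x : ℝ) (h0 : x ≠ 0) (h1 : |x| < 1) :
    HasSum (fun n : ℕ =>
        if n = 0 then 1 / x ^ 2
        else 1 / (2 * (n : ℝ) - x) ^ 2 + 1 / (2 * (n : ℝ) + x) ^ 2)
      (π ^ 2 * Real.cos (π * x / 2)
          * (1 + (1 / Real.cos (π * x / 2) + Real.tan (π * x / 2)) ^ 2)
        / (8 * Real.sin (π * x / 2) ^ 2
          * (1 / Real.cos (π * x / 2) + Real.tan (π * x / 2)))) := by
  obtain ⟨hx_lo, hx_hi⟩ := abs_lt.mp h1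
  have hcos : cos (π * x / 2) ≠ 0 :=
    (cos_pos_of_mem_Ioo ⟨by nlinarith [pi_pos], by nlinarith [pi_pos]⟩).ne'
  have hsin : sin (π * x / 2) ≠ 0 := by
    rw [Ne, sin_eq_zero_iff_of_lt_of_lt (by nlinarith [pi_pos]) (by nlinarith [pi_pos])]
    exact div_ne_zero (mul_ne_zero pi_ne_zero h0) two_ne_zero
  have hsec := cos_mul_one_add_sec_add_tan_sq hcos
  have hsec_add_tan : 1 / cos (π * x / 2) + tan (π * x / 2) ≠ 0 := by
    intro h
    rw [h] at hsec
    exact hcos (by simpa using hsec)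
  have hsum := ((hasSum_one_div_add_intCast_sq (a := x / 2)
    (by rwa [← mul_div_assoc])).div_const 4).nat_ite_zero_add_neg
  refine (congrArg₂ HasSum ?_ ?_).mp hsum
  · funext n
    split_ifs with hn
    · subst hn
      simp only [Int.cast_zero, add_zero]
      ring
    · push_cast
      field_simp
      ring
  · rw [mul_assoc, hsec, ← mul_div_assoc]
    generalize 1 / cos (π * x / 2) + tan (π * x / 2) = S at hsec_add_tan ⊢
    field_simp
    ring
end

section
/- For every real r, the integral over ℝ of e^{irθ}·sech(πθ/2) dθ equals 2 sech(r). -/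
open Real

/-!
Substituting `x = σ(θ) = (1 + e^{-θ})⁻¹` in the Beta integral gives
`B(1/2 + w, 1/2 - w) = ∫ e^{wθ} / (2 cosh (θ/2)) dθ`, because `σ' = σ(1 - σ)` and
`σ(θ) = e^{θ/2} / (2 cosh (θ/2))`, `1 - σ(θ) = e^{-θ/2} / (2 cosh (θ/2))`.
By `B(s, 1 - s) = Γ(s) Γ(1 - s) = π / sin (π s)` the integral is `π / cos (π w)`;
rescaling `θ` and taking `w = i r` gives the Fourier transform of `sech`.
-/

open MeasureTheory in
theorem Complex.betaIntegral_eq_integral_sigmoid (u v : ℂ) :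
    betaIntegral u v = ∫ x : ℝ, (sigmoid x : ℂ) ^ u * (1 - sigmoid x : ℂ) ^ v := by
  have hjacobian : ∀ x : ℝ, 0 < x → x < 1 → (x : ℂ) ^ (u - 1) * (1 - x : ℂ) ^ (v - 1) * (x * (1 - x))
      = (x : ℂ) ^ u * (1 - x : ℂ) ^ v := by
    intro x hx0 hx1
    have hx : (x : ℂ) ≠ 0 := by exact_mod_cast hx0.ne'
    have hx' : (1 - x : ℂ) ≠ 0 := by exact_mod_cast (sub_pos.2 hx1).ne'
    rw [cpow_sub _ _ hx, cpow_sub _ _ hx', cpow_one, cpow_one]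
    field_simp
  rw [betaIntegral, intervalIntegral.integral_of_le zero_le_one, integral_Ioc_eq_integral_Ioo,
    ← range_sigmoid, ← Set.image_univ,
    integral_image_eq_integral_abs_deriv_smul MeasurableSet.univ
      (fun x _ => (hasDerivAt_sigmoid x).hasDerivWithinAt) sigmoid_injective.injOn,
    setIntegral_univ]
  refine integral_congr_ae (Filter.Eventually.of_forall fun x => ?_)
  have h0 := sigmoid_pos x
  have h1 := sigmoid_lt_one x
  dsimp only
  rw [abs_of_pos (mul_pos h0 (sub_pos.2 h1)), real_smul, mul_comm]
  push_cast
  exact hjacobian _ h0 h1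

theorem Real.sigmoid_eq_exp_div_two_mul_cosh (x : ℝ) :
    sigmoid x = exp (x / 2) / (2 * cosh (x / 2)) := by
  rw [sigmoid_def, cosh_eq, inv_eq_one_div, div_eq_div_iff (by positivity) (by positivity)]
  have hsq : exp (-x) = exp (-(x / 2)) * exp (-(x / 2)) := by rw [← exp_add]; ring_nf
  have hinv : exp (x / 2) * exp (-(x / 2)) = 1 := by rw [← exp_add]; simp
  rw [hsq]
  linear_combination (-exp (-(x / 2))) * hinv

theorem Real.one_sub_sigmoid_eq_exp_div_two_mul_cosh (x : ℝ) :
    1 - sigmoid x = exp (-x / 2) / (2 * cosh (x / 2)) := by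
  rw [← sigmoid_neg, sigmoid_eq_exp_div_two_mul_cosh, neg_div, cosh_neg]

theorem Real.sigmoid_cpow_mul_one_sub_sigmoid_cpow (w : ℂ) (x : ℝ) :
    (sigmoid x : ℂ) ^ (1 / 2 + w) * (1 - sigmoid x : ℂ) ^ (1 / 2 - w)
      = Complex.exp (w * x) / (2 * cosh (x / 2) : ℝ) := by
  set C := 2 * cosh (x / 2) with hC
  have hC0 : 0 < C := by positivity
  have exp_div_cpow (t : ℝ) (z : ℂ) :
      ((exp t / C : ℝ) : ℂ) ^ z = Complex.exp ((t - log C : ℝ) * z) := by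
    rw [Complex.cpow_def_of_ne_zero (by exact_mod_cast (by positivity : exp t / C ≠ 0)),
      ← Complex.ofReal_log (by positivity), log_div (exp_pos t).ne' hC0.ne', log_exp]
  have hcast : (1 - sigmoid x : ℂ) = ((1 - sigmoid x : ℝ) : ℂ) := by push_cast; rfl
  rw [hcast, one_sub_sigmoid_eq_exp_div_two_mul_cosh, sigmoid_eq_exp_div_two_mul_cosh, ← hC,
    exp_div_cpow, exp_div_cpow, ← Complex.exp_add,
    show ((x / 2 - log C : ℝ) : ℂ) * (1 / 2 + w) + ((-x / 2 - log C : ℝ) : ℂ) * (1 / 2 - w)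
      = w * x - (log C : ℝ) by push_cast; ring,
    Complex.exp_sub, ← Complex.ofReal_exp, exp_log hC0]

theorem integral_cexp_mul_div_two_mul_cosh_half {w : ℂ} (hw : |w.re| < 1 / 2) :
    ∫ x : ℝ, Complex.exp (w * x) / (2 * cosh (x / 2) : ℝ) = π / Complex.cos (π * w) := by
  obtain ⟨hw₁, hw₂⟩ := abs_lt.1 hw
  have hGamma := Complex.Gamma_mul_Gamma_eq_betaIntegral (s := 1 / 2 + w) (t := 1 / 2 - w)
    (by simp; linarith) (by simp; linarith)
  rw [show 1 / 2 + w + (1 / 2 - w) = 1 by ring, Complex.Gamma_one, one_mul,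
    show 1 / 2 - w = 1 - (1 / 2 + w) by ring, Complex.Gamma_mul_Gamma_one_sub,
    Complex.betaIntegral_eq_integral_sigmoid, show (π : ℂ) * (1 / 2 + w) = π * w + π / 2 by ring,
    Complex.sin_add_pi_div_two] at hGamma
  rw [hGamma, show 1 - (1 / 2 + w) = 1 / 2 - w by ring]
  simp_rw [sigmoid_cpow_mul_one_sub_sigmoid_cpow]

theorem integral_cexp_mul_div_cosh {a : ℝ} (ha : 0 < a) {w : ℂ} (hw : |w.re| < a) :
    ∫ x : ℝ, Complex.exp (w * x) / (cosh (a * x) : ℝ)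
      = π / (a * Complex.cos (π * w / (2 * a))) := by
  have ha' : (a : ℂ) ≠ 0 := by exact_mod_cast ha.ne'
  have hw' : |(w / (2 * a : ℝ)).re| < 1 / 2 := by
    rw [Complex.div_ofReal_re, abs_div, abs_of_pos (by positivity : 0 < 2 * a),
      div_lt_iff₀ (by positivity)]
    linarith
  have hscale := MeasureTheory.Measure.integral_comp_mul_left
    (fun y : ℝ => Complex.exp (w / (2 * a : ℝ) * y) / (2 * cosh (y / 2) : ℝ)) (2 * a)
  rw [integral_cexp_mul_div_two_mul_cosh_half hw'] at hscale
  calc ∫ x : ℝ, Complex.exp (w * x) / (cosh (a * x) : ℝ)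
      = 2 * ∫ x : ℝ, Complex.exp (w / (2 * a : ℝ) * (2 * a * x : ℝ))
          / (2 * cosh (2 * a * x / 2) : ℝ) := by
        rw [← MeasureTheory.integral_const_mul]
        congr 1; ext x
        rw [show 2 * a * x / 2 = a * x by ring]
        push_cast
        field_simp
    _ = π / (a * Complex.cos (π * w / (2 * a))) := by
        rw [hscale, abs_of_pos (by positivity), Complex.real_smul]
        push_cast
        field_simp

theorem stmt19 (r : ℝ) :
    ∫ θ : ℝ, Complex.exp (Complex.I * r * θ) * (1 / Real.cosh (π * θ / 2) : ℝ)
      = 2 * (1 / Real.cosh r : ℝ) := by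
  calc ∫ θ : ℝ, Complex.exp (Complex.I * r * θ) * (1 / Real.cosh (π * θ / 2) : ℝ)
      = ∫ θ : ℝ, Complex.exp (Complex.I * r * θ) / (cosh (π / 2 * θ) : ℝ) := by
        simp_rw [Complex.ofReal_div, Complex.ofReal_one, mul_one_div, div_mul_eq_mul_div₀]
    _ = π / ((π / 2 : ℝ) * Complex.cos (π * (Complex.I * r) / (2 * (π / 2 : ℝ)))) :=
        integral_cexp_mul_div_cosh (by positivity) (by simpa using pi_div_two_pos)
    _ = 2 * (1 / Real.cosh r : ℝ) := by
        rw [show π * (Complex.I * r) / (2 * (π / 2 : ℝ)) = r * Complex.I by push_cast; field_simp,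
          Complex.cos_mul_I, ← Complex.ofReal_cosh]
        push_cast
        field_simp
end
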